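/- For every t > 0 one has ∫_ℝ |ũ(x,t)| dx = 1/2. In particular, ‖ũ(·,t)‖_{L¹(ℝ)} = 1/2 ≠ 0 = ‖u_0‖_{L¹(ℝ)} for every t > 0, so ũ(·,t) does not converge to the initial datum u_0 = 0 in L¹(ℝ) (nor in L¹_loc(ℝ)) as t → 0⁺; hence ũ, a weak solution of ∂_t u + ∂_x(u²) = 0 with zero initial datum, is not continuous at t = 0 with values in L¹_loc(ℝ). -/
import Mathlib


open MeasureTheory Filter Topology Real

noncomputable section

/-- The function `ũ(x,t) = x/(2t)` if `t > 0` and `|x| < √t`, and `ũ(x,t) = 0`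
otherwise (in particular `ũ(x,0) = 0` for all `x`). -/
def burgersU (x t : ℝ) : ℝ :=
  if 0 < t ∧ |x| < Real.sqrt t then x / (2 * t) else 0

lemma burgersU_abs_eq (t : ℝ) (ht : 0 < t) :
    (fun x : ℝ => |burgersU x t|) =
      Set.indicator (Set.Ioo (-Real.sqrt t) (Real.sqrt t)) (fun x => |x| / (2 * t)) := by
  funext x
  set s := Real.sqrt t
  simp only [burgersU]
  by_cases hx : |x| < s
  · have hmem : x ∈ Set.Ioo (-s) s := by
      have := abs_lt.mp hx; exact ⟨this.1, this.2⟩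
    rw [if_pos ⟨ht, hx⟩, Set.indicator_of_mem hmem, abs_div,
      abs_of_pos (by linarith : (0:ℝ) < 2 * t)]
  · have hmem : x ∉ Set.Ioo (-s) s := by
      intro h; exact hx (abs_lt.mpr ⟨h.1, h.2⟩)
    rw [if_neg (by tauto), Set.indicator_of_notMem hmem, abs_zero]

lemma burgersU_integral (t : ℝ) (ht : 0 < t) :
    ∫ x : ℝ, |burgersU x t| = 1 / 2 := by
  set s := Real.sqrt t with hs
  have hs0 : 0 < s := Real.sqrt_pos.mpr ht
  rw [burgersU_abs_eq t ht, MeasureTheory.integral_indicator measurableSet_Ioo,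
    ← MeasureTheory.integral_Ioc_eq_integral_Ioo,
    ← intervalIntegral.integral_of_le (by linarith : -s ≤ s)]
  have hI1 : IntervalIntegrable (fun x : ℝ => |x| / (2 * t)) volume (-s) 0 :=
    (continuous_abs.div_const _).intervalIntegrable _ _
  have hI2 : IntervalIntegrable (fun x : ℝ => |x| / (2 * t)) volume 0 s :=
    (continuous_abs.div_const _).intervalIntegrable _ _
  rw [← intervalIntegral.integral_add_adjacent_intervals hI1 hI2]
  have h1 : ∫ x in (-s)..0, |x| / (2 * t) = ∫ x in (-s)..0, -x / (2 * t) := by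
    apply intervalIntegral.integral_congr
    intro x hx
    rw [Set.uIcc_of_le (by linarith : -s ≤ 0)] at hx
    simp only []
    rw [abs_of_nonpos hx.2]
  have h2 : ∫ x in (0:ℝ)..s, |x| / (2 * t) = ∫ x in (0:ℝ)..s, x / (2 * t) := by
    apply intervalIntegral.integral_congr
    intro x hx
    rw [Set.uIcc_of_le (by linarith : (0:ℝ) ≤ s)] at hx
    simp only []
    rw [abs_of_nonneg hx.1]
  rw [h1, h2]
  have hid : ∀ a b : ℝ, ∫ x in a..b, x / (2 * t) = (b ^ 2 - a ^ 2) / 2 / (2 * t) := by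
    intro a b
    rw [intervalIntegral.integral_div, integral_id]
  have hneg : ∫ x in (-s)..(0:ℝ), -x / (2 * t) = -((0 ^ 2 - (-s) ^ 2) / 2 / (2 * t)) := by
    rw [show (fun x : ℝ => -x / (2*t)) = (fun x : ℝ => -(x / (2*t))) by funext x; ring]
    rw [intervalIntegral.integral_neg, hid]
  rw [hneg, hid]
  have ht2 : s ^ 2 = t := Real.sq_sqrt ht.le
  field_simp
  nlinarith [ht2]

/-- For every `t > 0`, `∫_ℝ |ũ(x,t)| dx = 1/2 ≠ 0 = ‖u_0‖_{L¹}`;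
hence `ũ(·,t)` does not converge to the initial datum `u_0 = 0` in `L¹(ℝ)`, nor in
`L¹_loc(ℝ)`, as `t → 0⁺`: the weak solution `ũ` is not continuous at `t = 0` with
values in `L¹_loc(ℝ)`. -/
theorem burgersU_not_continuous_at_zero :
    -- the `L¹`-norm of `ũ(·,t)` is `1/2` for every `t > 0`
    (∀ t : ℝ, 0 < t → ∫ x : ℝ, |burgersU x t| = 1 / 2) ∧
    -- no convergence to `0` in `L¹(ℝ)` as `t → 0⁺`
    ¬ Tendsto (fun t => ∫ x : ℝ, |burgersU x t|) (𝓝[>] (0 : ℝ)) (𝓝 0) ∧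
    -- no convergence to `0` in `L¹_loc(ℝ)` as `t → 0⁺`
    ∃ K : Set ℝ, IsCompact K ∧
      ¬ Tendsto (fun t => ∫ x in K, |burgersU x t|) (𝓝[>] (0 : ℝ)) (𝓝 0) := by
  have hne : (𝓝[>] (0:ℝ)).NeBot := nhdsGT_neBot 0
  refine ⟨fun t ht => burgersU_integral t ht, ?_, ?_⟩
  · intro h
    have heq : (fun t => ∫ x : ℝ, |burgersU x t|) =ᶠ[𝓝[>] (0:ℝ)] fun _ => (1/2 : ℝ) := by
      filter_upwards [self_mem_nhdsWithin] with t ht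
      exact burgersU_integral t ht
    have := tendsto_nhds_unique ((tendsto_congr' heq).mp h) tendsto_const_nhds
    norm_num at this
  · refine ⟨Set.Icc (-1) 1, isCompact_Icc, ?_⟩
    intro h
    have heq : (fun t => ∫ x in Set.Icc (-1:ℝ) 1, |burgersU x t|) =ᶠ[𝓝[>] (0:ℝ)]
        fun _ => (1/2 : ℝ) := by
      filter_upwards [Ioo_mem_nhdsGT_of_mem (by norm_num : (0:ℝ) ∈ Set.Ico 0 1)]
        with t ht
      have ht0 : 0 < t := ht.1
      have hst : Real.sqrt t ≤ 1 := by
        rw [show (1:ℝ) = Real.sqrt 1 by simp]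
        exact Real.sqrt_le_sqrt ht.2.le
      rw [setIntegral_eq_integral_of_forall_compl_eq_zero, burgersU_integral t ht0]
      intro x hx
      simp only [Set.mem_Icc, not_and_or, not_le] at hx
      have hxa : ¬ |x| < Real.sqrt t := by
        rcases hx with hx | hx
        · intro hc; have := (abs_lt.mp hc).1; linarith
        · intro hc; have := (abs_lt.mp hc).2; linarith
      simp [burgersU, hxa]
    have := tendsto_nhds_unique ((tendsto_congr' heq).mp h) tendsto_const_nhds
    norm_num at this
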